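/- In the lower-bound arena A (nodes u, t, v₀, v₁, …, vₙ; colors {x, y, z, c, d}; Player 1 controls all nodes except t; edges: z-colored edges from u to each vᵢ; for each i ≥ 1 an x-colored edge from vᵢ to v_{i−1} and a y-colored self-loop at vᵢ; an x-colored edge from v₀ to vₙ and a y-colored self-loop at v₀; a z-colored edge from v₀ to t; a c-colored and a d-colored edge from t to v₀), for every word w ∈ {x,y}* there exists a finite path p with source(p) = u, target(p) = t, and col(p) = z w z. -/

import Mathlib

/-- An arena over a set of colors `C`. -/
structure Arena (C : Type) where
  V : Type
  E : Type
  finV : Fintype V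
  finE : Fintype E
  /-- `isP0 v` means node `v` is controlled by Player 0. -/
  isP0 : V → Prop
  source : E → V
  target : E → V
  col : E → C
  out : ∀ v : V, ∃ e : E, source e = v

namespace Arena

variable {C : Type} (A : Arena C)

/-- `PathFrom v es w` : the edge list `es` forms a finite path from `v` to `w`. -/
def PathFrom : A.V → List A.E → A.V → Prop
  | v, [], w => v = w
  | v, e :: es, w => A.source e = v ∧ PathFrom (A.target e) es w

/-- The endpoint of the edge list `es` started at `v`. -/
def ptarget (v : A.V) (es : List A.E) : A.V := es.foldl (fun _ e => A.target e) v

/-- A strategy of Player 0: given the starting node and the finite play so far,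
it outputs the next edge. -/
def Strategy (A : Arena C) : Type := A.V → List A.E → A.E

/-- A legal strategy moves along an edge leaving the current node. -/
def IsStrategy (S : A.Strategy) : Prop :=
  ∀ v es, A.source (S v es) = A.ptarget v es

/-- The finite edge list `es`, viewed as a play from `v`, is consistent with `S`:
at every prefix ending in a Player-0 node, the next edge is the one chosen by `S`. -/
def ConsFrom (S : A.Strategy) (v : A.V) (es : List A.E) : Prop :=
  ∀ p e r, es = p ++ e :: r → A.isP0 (A.ptarget v p) → e = S v p

/-- `P` is an infinite path starting at `v`. -/
def InfPlay (v : A.V) (P : ℕ → A.E) : Prop :=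
  A.source (P 0) = v ∧ ∀ i, A.target (P i) = A.source (P (i + 1))

/-- The length-`k` prefix of an infinite play, as a list. -/
def prefixList (P : ℕ → A.E) (k : ℕ) : List A.E := List.ofFn (fun i : Fin k => P i)

/-- `colSet S v` is the set of color sequences of infinite plays from `v` consistent with `S`. -/
def colSet (S : A.Strategy) (v : A.V) : Set (ℕ → C) :=
  { γ | ∃ P : ℕ → A.E, A.InfPlay v P ∧ (∀ k, A.ConsFrom S v (A.prefixList P k)) ∧
      γ = fun i => A.col (P i) }

/-- `colSetU S U = ⋃ v ∈ U, colSet S v`. -/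
def colSetU (S : A.Strategy) (U : Set A.V) : Set (ℕ → C) := ⋃ v ∈ U, A.colSet S v

/-- State of a memory structure after reading a list of edges. -/
def mstate {M : Type} (δ : M → A.E → M) (m0 : M) (es : List A.E) : M := es.foldl δ m0

/-- `S` is implemented by the memory structure `(M, m0, δ)`: its moves depend only
on the current node and the current memory state. -/
def HasMemory (S : A.Strategy) (M : Type) (m0 : M) (δ : M → A.E → M) : Prop :=
  ∀ v1 es1 v2 es2, A.ptarget v1 es1 = A.ptarget v2 es2 →
    A.mstate δ m0 es1 = A.mstate δ m0 es2 → S v1 es1 = S v2 es2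

/-- A memory structure is chromatic if transitions depend only on colors of edges. -/
def ChromaticMem (M : Type) (δ : M → A.E → M) : Prop :=
  ∃ σ : M → C → M, ∀ m e, δ m e = σ m (A.col e)

/-- `S` is a `q`-state strategy. -/
def IsQState (S : A.Strategy) (q : ℕ) : Prop :=
  ∃ (M : Type) (_ : Fintype M) (m0 : M) (δ : M → A.E → M),
    Fintype.card M = q ∧ A.HasMemory S M m0 δ

/-- `S` is a chromatic `q`-state strategy. -/
def IsChromaticQState (S : A.Strategy) (q : ℕ) : Prop :=
  ∃ (M : Type) (_ : Fintype M) (m0 : M) (δ : M → A.E → M),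
    Fintype.card M = q ∧ A.ChromaticMem M δ ∧ A.HasMemory S M m0 δ

end Arena

/-- The set of colors of the lower-bound arena. -/
inductive Col : Type
  | x | y | z | c | d
deriving DecidableEq

instance : Fintype Col where
  elems := {Col.x, Col.y, Col.z, Col.c, Col.d}
  complete := fun a => by cases a <;> simp

/-- Nodes of the lower-bound arena: `u`, `t`, and `v₀, …, vₙ`. -/
inductive Node (n : ℕ) : Type
  | u | t
  | v (i : Fin (n + 1))
deriving DecidableEq, Fintype

/-- Edges of the lower-bound arena. -/
inductive Edge (n : ℕ) : Type
  /-- `z`-colored edge from `u` to `vᵢ`. -/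
  | uv (i : Fin (n + 1))
  /-- `x`-colored edge from `vᵢ` to `v_{i-1}` (from `v₀` to `vₙ` when `i = 0`). -/
  | xe (i : Fin (n + 1))
  /-- `y`-colored self-loop at `vᵢ`. -/
  | ye (i : Fin (n + 1))
  /-- `z`-colored edge from `v₀` to `t`. -/
  | vt
  /-- `c`-colored edge from `t` to `v₀`. -/
  | tc
  /-- `d`-colored edge from `t` to `v₀`. -/
  | td
deriving DecidableEq, Fintype

def Edge.src {n : ℕ} : Edge n → Node n
  | uv _ => Node.u
  | xe i => Node.v i
  | ye i => Node.v i
  | vt => Node.v 0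
  | tc => Node.t
  | td => Node.t

def Edge.tgt {n : ℕ} : Edge n → Node n
  | uv i => Node.v i
  | xe i => Node.v (i - 1)
  | ye i => Node.v i
  | vt => Node.t
  | tc => Node.v 0
  | td => Node.v 0

def Edge.color {n : ℕ} : Edge n → Col
  | uv _ => Col.z
  | xe _ => Col.x
  | ye _ => Col.y
  | vt => Col.z
  | tc => Col.c
  | td => Col.d

/-- The lower-bound arena: Player 0 controls only the node `t`. -/
def lbArena (n : ℕ) : Arena Col where
  V := Node n
  E := Edge n
  finV := inferInstance
  finE := inferInstance
  isP0 := fun v => v = Node.t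
  source := Edge.src
  target := Edge.tgt
  col := Edge.color
  out := by
    intro v
    cases v with
    | u => exact ⟨Edge.uv 0, rfl⟩
    | t => exact ⟨Edge.tc, rfl⟩
    | v i => exact ⟨Edge.ye i, rfl⟩

/-! Each vertex `vᵢ` has a `y`-loop and an `x`-edge to `v_{i-1}` (indices mod `n + 1`), so
reading a word over `{x, y}` from `vᵢ` is always possible and ends at `v_{i-k}`, where `k` counts
the `x`'s. Starting at `v_k` therefore ends at `v₀`, and the `z`-edges `u → v_k` and `v₀ → t`
close the path. -/

theorem Arena.PathFrom.append {C : Type} {A : Arena C} {v w u : A.V} {es fs : List A.E}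
    (hes : A.PathFrom v es w) (hfs : A.PathFrom w fs u) : A.PathFrom v (es ++ fs) u := by
  induction es generalizing v with
  | nil => cases hes; exact hfs
  | cons e es ih => exact ⟨hes.1, ih hes.2⟩

open Fin.NatCast in
theorem lbArena_exists_path_from_v (n : ℕ) (w : List Col)
    (hw : ∀ a ∈ w, a = Col.x ∨ a = Col.y) (i : Fin (n + 1)) :
    ∃ es : List (Edge n),
      (lbArena n).PathFrom (Node.v i) es (Node.v (i - ((w.count Col.x : ℕ) : Fin (n + 1)))) ∧
        es.map (lbArena n).col = w := by
  induction w generalizing i with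
  | nil => exact ⟨[], by simp [Arena.PathFrom, lbArena], rfl⟩
  | cons a w ih =>
    have hw' : ∀ b ∈ w, b = Col.x ∨ b = Col.y := fun b hb => hw b (List.mem_cons_of_mem _ hb)
    rcases hw a List.mem_cons_self with rfl | rfl
    · obtain ⟨es, hp, hc⟩ := ih hw' (i - 1)
      refine ⟨Edge.xe i :: es, ⟨rfl, ?_⟩, by simpa [lbArena, Edge.color] using hc⟩
      simpa [lbArena, Edge.tgt, sub_sub, add_comm] using hp
    · obtain ⟨es, hp, hc⟩ := ih hw' i
      exact ⟨Edge.ye i :: es, ⟨rfl, hp⟩, by simpa [lbArena, Edge.color] using hc⟩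

theorem lbArena_exists_path_to_v_zero (n : ℕ) (w : List Col)
    (hw : ∀ a ∈ w, a = Col.x ∨ a = Col.y) :
    ∃ (i : Fin (n + 1)) (es : List (Edge n)),
      (lbArena n).PathFrom (Node.v i) es (Node.v 0) ∧ es.map (lbArena n).col = w := by
  open Fin.NatCast in
  obtain ⟨es, hp, hc⟩ := lbArena_exists_path_from_v n w hw (w.count Col.x : ℕ)
  rw [sub_self] at hp
  exact ⟨_, es, hp, hc⟩

theorem lb_path_exists_general (n : ℕ) (w : List Col)
    (hw : ∀ a ∈ w, a = Col.x ∨ a = Col.y) :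
    ∃ es : List (Edge n), (lbArena n).PathFrom (Node.u) es (Node.t) ∧
      es.map (lbArena n).col = Col.z :: (w ++ [Col.z]) := by
  obtain ⟨i, es, hp, hc⟩ := lbArena_exists_path_to_v_zero n w hw
  have hcol : (Edge.uv i :: (es ++ [Edge.vt])).map Edge.color = Col.z :: (w ++ [Col.z]) := by
    rw [List.map_cons, List.map_append, ← hc]
    rfl
  exact ⟨Edge.uv i :: (es ++ [Edge.vt]), ⟨rfl, hp.append ⟨rfl, rfl⟩⟩, hcol⟩

/-- In the lower-bound arena, for every word `w ∈ {x,y}*` there is a finite path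
from `u` to `t` colored `z w z`. -/
theorem lb_path_exists (n : ℕ) (hn : 1 ≤ n) (w : List Col)
    (hw : ∀ a ∈ w, a = Col.x ∨ a = Col.y) :
    ∃ es : List (Edge n), (lbArena n).PathFrom (Node.u) es (Node.t) ∧
      es.map (lbArena n).col = Col.z :: (w ++ [Col.z]) :=
  lb_path_exists_general n w hw
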